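/- Let n ≥ 4 be even, ℓ an integer with 0 ≤ ℓ ≤ (n−2)/2, and π' = π \ {α_{n−1−2k} : 0 ≤ k ≤ ℓ} \ {α_n} in type D_n. In ℝ^n let S⁺ = {β_i = ε_{2i-1}+ε_{2i} : 1 ≤ i ≤ (n−2)/2} and S⁻ = {−β'_i = ε_{n−2ℓ−i} − ε_i : 1 ≤ i ≤ (n−2−2ℓ)/2}. Then the restrictions of S = S⁺ ∪ S⁻ to h' = span{α^∨ : α ∈ π'} form a basis of (h')^*; in particular |S| = n − 2 − ℓ = dim h'. -/

import Mathlib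

open scoped RealInnerProductSpace

/-- 1-based orthonormal basis vectors `ε_k` of `ℝ^n` (zero out of range). -/
noncomputable def eps (n k : ℕ) : EuclideanSpace ℝ (Fin n) :=
  if h : 1 ≤ k ∧ k ≤ n then EuclideanSpace.single ⟨k - 1, by omega⟩ (1 : ℝ) else 0

/-- The restriction to the subspace `W` of the linear functional `⟪x, ·⟫`
(i.e. the restriction to `W` of a weight `x`, under the identification of
weights with vectors given by the form). -/
noncomputable def restrictedInner {n : ℕ} (x : EuclideanSpace ℝ (Fin n))
    (W : Submodule ℝ (EuclideanSpace ℝ (Fin n))) : Module.Dual ℝ W where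
  toFun w := ⟪x, (w : EuclideanSpace ℝ (Fin n))⟫
  map_add' a b := by simp [inner_add_right]
  map_smul' c a := by simp [inner_smul_right]

/-- The coroots of type `D_n` : `α_k^∨ = ε_k - ε_{k+1}` for `k < n` and
`α_n^∨ = ε_{n-1} + ε_n`. -/
noncomputable def corootD (n k : ℕ) : EuclideanSpace ℝ (Fin n) :=
  if k = n then eps n (n - 1) + eps n n else eps n k - eps n (k + 1)

/-!
Write `n = 2q + 2ℓ + 2`. The coroots spanning `h'` are `ε_k - ε_{k+1}` for `k ≤ 2q` and for the
even `2q < k < n`; they are linearly independent, so `dim h' = 2q + ℓ = |S|`, and it suffices to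
show that a combination `v = ∑ aᵢ βᵢ - ∑ bⱼ β'ⱼ` orthogonal to `h'` vanishes. Orthogonality to
`α_{2q+2t}^∨` gives `a_{q+1} = ⋯ = a_{q+ℓ+1} = 0`, and orthogonality to `α_1^∨, …, α_{2q}^∨`
makes the first `2q + 1` coordinates of `v` equal to some `c`. The reflection `p ↦ 2q + 2 - p`
cancels the `b`'s in `v_p + v_{2q+2-p}`, which yields `aᵢ + a_{q+1-i} = aᵢ + a_{q+2-i} = 2c`;
hence `a` is constant on `1, …, q + 1`, so zero, then `c = 0` and finally every `bⱼ = 0`.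
-/

open Module Submodule

section Eps

variable {n : ℕ}

theorem inner_eps_eps (k j : ℕ) :
    ⟪eps n k, eps n j⟫ = if k = j ∧ 1 ≤ k ∧ k ≤ n then 1 else 0 := by
  unfold eps
  split_ifs <;> simp [EuclideanSpace.inner_single_left, PiLp.single_apply, Fin.ext_iff] <;> omega

theorem inner_eps_sum_Icc_eps {j : ℕ} (hj : 1 ≤ j) (hjn : j ≤ n) (k : ℕ) :
    ⟪eps n j, ∑ p ∈ Finset.Icc 1 k, eps n p⟫ = if j ≤ k then 1 else 0 := by
  rw [inner_sum, Finset.sum_congr rfl fun p _ => inner_eps_eps j p]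
  simp [hj, hjn]

theorem linearIndependent_eps_sub_eps_succ {ι : Type*} [Fintype ι] {κ : ι → ℕ}
    (hκ : Function.Injective κ) (hpos : ∀ i, 1 ≤ κ i) (hlt : ∀ i, κ i < n) :
    LinearIndependent ℝ fun i => eps n (κ i) - eps n (κ i + 1) := by
  classical
  rw [Fintype.linearIndependent_iff]
  intro c hc i₀
  -- pairing with `ε_1 + ⋯ + ε_{κ i₀}` isolates the coefficient of `i₀`
  have hpair : ∀ i, ⟪eps n (κ i) - eps n (κ i + 1), ∑ p ∈ Finset.Icc 1 (κ i₀), eps n p⟫ =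
      if i = i₀ then 1 else 0 := by
    intro i
    rw [inner_sub_left, inner_eps_sum_Icc_eps (hpos i) (hlt i).le,
      inner_eps_sum_Icc_eps (by omega) (hlt i)]
    rcases eq_or_ne i i₀ with rfl | h
    · simp
    · have := hκ.ne h
      split_ifs <;> first | (exfalso; omega) | norm_num
  have := congrArg (⟪·, ∑ p ∈ Finset.Icc 1 (κ i₀), eps n p⟫) hc
  simpa [sum_inner, real_inner_smul_left, hpair] using this

theorem corootD_of_ne {k : ℕ} (hk : k ≠ n) : corootD n k = eps n k - eps n (k + 1) :=
  if_neg hk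

theorem linearIndependent_restrictedInner_iff {ι : Type*} [Fintype ι]
    (v : ι → EuclideanSpace ℝ (Fin n)) (W : Submodule ℝ (EuclideanSpace ℝ (Fin n))) :
    LinearIndependent ℝ (fun i => restrictedInner (v i) W) ↔
      ∀ c : ι → ℝ, (∀ w ∈ W, ⟪∑ i, c i • v i, w⟫ = 0) → c = 0 := by
  rw [Fintype.linearIndependent_iff]
  refine forall_congr' fun c => ?_
  have : ∑ i, c i • restrictedInner (v i) W = 0 ↔ ∀ w ∈ W, ⟪∑ i, c i • v i, w⟫ = 0 := by
    simp [LinearMap.ext_iff, restrictedInner, sum_inner, real_inner_smul_left]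
  rw [this, funext_iff]
  rfl

end Eps

theorem eq_of_forall_succ_eq {α : Type*} {f : ℕ → α} {a b : ℕ}
    (h : ∀ k, a ≤ k → k < b → f (k + 1) = f k) {k : ℕ} (hak : a ≤ k) (hkb : k ≤ b) :
    f k = f a := by
  induction k, hak using Nat.le_induction with
  | base => rfl
  | succ k hak ih => rw [h k hak (by omega), ih (by omega)]

section CascadeCoefficients

variable {q : ℕ} {A B v : ℕ → ℝ}

theorem cascade_tail_eq_zero {ℓ : ℕ} (hv : ∀ p, v p = A ((p + 1) / 2) + B (2 * q + 2 - p) - B p)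
    (hB : ∀ j, j = 0 ∨ q < j → B j = 0) (hA : ∀ i, q + ℓ < i → A i = 0)
    (htail : ∀ t < ℓ, v (2 * q + 2 * t + 2 + 1) = v (2 * q + 2 * t + 2))
    {i : ℕ} (hi : q < i) : A i = 0 := by
  have hstep : ∀ k, i ≤ k → k < q + ℓ + 1 → A (k + 1) = A k := by
    intro k hik hk
    have h := htail (k - q - 1) (by omega)
    rw [show 2 * q + 2 * (k - q - 1) + 2 = 2 * k by omega, hv, hv,
      show (2 * k + 1 + 1) / 2 = k + 1 by omega, show (2 * k + 1) / 2 = k by omega,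
      show 2 * q + 2 - (2 * k + 1) = 0 by omega, show 2 * q + 2 - 2 * k = 0 by omega,
      hB (2 * k) (by omega), hB (2 * k + 1) (by omega)] at h
    linarith
  rcases le_or_gt i (q + ℓ + 1) with h | h
  · rw [← eq_of_forall_succ_eq hstep h le_rfl]
    exact hA _ (by omega)
  · exact hA i (by omega)

theorem cascade_core_eq_zero (hv : ∀ p, v p = A ((p + 1) / 2) + B (2 * q + 2 - p) - B p)
    (hB : ∀ j, q < j → B j = 0) (hA : A (q + 1) = 0)
    (hcore : ∀ k, 1 ≤ k → k < 2 * q + 1 → v (k + 1) = v k) :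
    (∀ i, 1 ≤ i → i ≤ q → A i = 0) ∧ ∀ j, 1 ≤ j → B j = 0 := by
  have hconst : ∀ p, 1 ≤ p → p ≤ 2 * q + 1 → v p = v 1 := fun p h1 h2 =>
    eq_of_forall_succ_eq hcore h1 h2
  have hsym : ∀ p, 1 ≤ p → p ≤ 2 * q + 1 → A ((p + 1) / 2) + A ((2 * q + 3 - p) / 2) = 2 * v 1 := by
    intro p h1 h2
    have e := hv (2 * q + 2 - p)
    rw [show 2 * q + 2 - (2 * q + 2 - p) = p by omega,
      show 2 * q + 2 - p + 1 = 2 * q + 3 - p by omega] at e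
    linarith [hv p, hconst p h1 h2, hconst (2 * q + 2 - p) (by omega) (by omega)]
  have hAstep : ∀ k, 1 ≤ k → k < q + 1 → A (k + 1) = A k := by
    intro k h1 h2
    have s1 := hsym (2 * k) (by omega) (by omega)
    have s2 := hsym (2 * (q + 1 - k) - 1) (by omega) (by omega)
    rw [show (2 * k + 1) / 2 = k by omega, show (2 * q + 3 - 2 * k) / 2 = q + 1 - k by omega] at s1
    rw [show (2 * (q + 1 - k) - 1 + 1) / 2 = q + 1 - k by omega,
      show (2 * q + 3 - (2 * (q + 1 - k) - 1)) / 2 = k + 1 by omega] at s2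
    linarith
  have hA0 : ∀ i, 1 ≤ i → i ≤ q + 1 → A i = 0 := fun i h1 h2 => by
    rw [eq_of_forall_succ_eq hAstep h1 h2, ← eq_of_forall_succ_eq hAstep (by omega) le_rfl, hA]
  have hv1 : v 1 = 0 := by
    have h := hsym 1 le_rfl (by omega)
    rw [show (2 * q + 3 - 1) / 2 = q + 1 by omega, hA0 1 le_rfl (by omega), hA] at h
    linarith
  refine ⟨fun i h1 h2 => hA0 i h1 (by omega), fun j h1 => ?_⟩
  rcases le_or_gt j q with h | h
  · have e := hv j
    rw [hconst j h1 (by omega), hv1, hA0 _ (by omega) (by omega), hB _ (by omega)] at e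
    linarith
  · exact hB j h

end CascadeCoefficients

def extendOneBased {m : ℕ} (f : Fin m → ℝ) (j : ℕ) : ℝ :=
  ∑ i : Fin m, if j = i + 1 then f i else 0

theorem extendOneBased_succ {m : ℕ} (f : Fin m → ℝ) (i : Fin m) :
    extendOneBased f (i + 1) = f i := by
  simp [extendOneBased, Fin.val_inj]

theorem extendOneBased_eq_zero {m : ℕ} (f : Fin m → ℝ) {j : ℕ} (hj : j = 0 ∨ m < j) :
    extendOneBased f j = 0 :=
  Finset.sum_eq_zero fun i _ => if_neg (by omega)

/-- `β_{i+1} = ε_{2i+1} + ε_{2i+2}` for `i < q + ℓ` and `-β'_{j+1} = ε_{2q+1-j} - ε_{j+1}`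
for `j < q`. -/
noncomputable def cascadeFamily (n q ℓ : ℕ) : Fin (q + ℓ) ⊕ Fin q → EuclideanSpace ℝ (Fin n) :=
  Sum.elim (fun i => eps n (2 * i + 1) + eps n (2 * i + 2))
    (fun j => eps n (2 * q + 1 - j) - eps n (j + 1))

theorem inner_sum_smul_cascadeFamily_eps {n q ℓ : ℕ} (hℓ : 2 * (q + ℓ) ≤ n) (hq : 2 * q + 1 ≤ n)
    (G : Fin (q + ℓ) ⊕ Fin q → ℝ) (p : ℕ) :
    ⟪∑ x, G x • cascadeFamily n q ℓ x, eps n p⟫ =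
      extendOneBased (G ∘ Sum.inl) ((p + 1) / 2) + extendOneBased (G ∘ Sum.inr) (2 * q + 2 - p)
        - extendOneBased (G ∘ Sum.inr) p := by
  rw [sum_inner]
  simp only [Fintype.sum_sum_type, extendOneBased, add_sub_assoc,
    ← Finset.sum_sub_distrib]
  congr 1 <;> refine Finset.sum_congr rfl fun i _ => ?_ <;>
    simp only [cascadeFamily, Sum.elim_inl, Sum.elim_inr, Function.comp_apply,
      real_inner_smul_left, inner_add_left, inner_sub_left, inner_eps_eps] <;>
    have := i.2 <;> split_ifs <;> first | (exfalso; omega) | ring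

def keptCorootIndex (q ℓ : ℕ) : Fin (2 * q) ⊕ Fin ℓ → ℕ :=
  Sum.elim (fun k => k + 1) (fun t => 2 * q + 2 * t + 2)

section KeptCoroots

variable {n q ℓ : ℕ}

theorem keptCorootIndex_injective : Function.Injective (keptCorootIndex q ℓ) := by
  rintro (i | i) (j | j) h <;> simp only [keptCorootIndex, Sum.elim_inl, Sum.elim_inr] at h <;>
    first | (exfalso; omega) | (congr 1; ext; omega)

theorem one_le_keptCorootIndex (x : Fin (2 * q) ⊕ Fin ℓ) : 1 ≤ keptCorootIndex q ℓ x := by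
  rcases x with k | t <;> simp [keptCorootIndex]

theorem keptCorootIndex_lt (hn : n = 2 * q + 2 * ℓ + 2) (x : Fin (2 * q) ⊕ Fin ℓ) :
    keptCorootIndex q ℓ x < n := by
  rcases x with k | t <;> simp only [keptCorootIndex, Sum.elim_inl, Sum.elim_inr] <;> omega

theorem range_corootD_keptCorootIndex (hn : n = 2 * q + 2 * ℓ + 2) :
    Set.range (fun x => corootD n (keptCorootIndex q ℓ x)) =
      {v | ∃ k, 1 ≤ k ∧ k ≤ n ∧ ¬ (k = n ∨ ∃ t, t ≤ ℓ ∧ k = n - 1 - 2 * t) ∧ v = corootD n k} := by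
  ext v
  constructor
  · rintro ⟨x, rfl⟩
    refine ⟨_, one_le_keptCorootIndex x, (keptCorootIndex_lt hn x).le, ?_, rfl⟩
    rintro (h | ⟨t, htℓ, ht⟩)
    · exact (keptCorootIndex_lt hn x).ne h
    · rcases x with k | s <;> simp only [keptCorootIndex, Sum.elim_inl, Sum.elim_inr] at ht <;>
        omega
  · rintro ⟨k, hk1, hkn, hk, rfl⟩
    push Not at hk
    rcases le_or_gt k (2 * q) with h | h
    · exact ⟨Sum.inl ⟨k - 1, by omega⟩, by simp only [keptCorootIndex, Sum.elim_inl]; congr; omega⟩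
    · -- the indices `2q < k < n` that are kept are the even ones
      have hnotodd := hk.2 ((n - 1 - k) / 2)
      refine ⟨Sum.inr ⟨(k - 2 * q - 2) / 2, by omega⟩, ?_⟩
      simp only [keptCorootIndex, Sum.elim_inr]
      congr
      omega

theorem corootD_keptCorootIndex (hn : n = 2 * q + 2 * ℓ + 2) :
    (fun x => corootD n (keptCorootIndex q ℓ x)) =
      fun x => eps n (keptCorootIndex q ℓ x) - eps n (keptCorootIndex q ℓ x + 1) :=
  funext fun x => corootD_of_ne (keptCorootIndex_lt hn x).ne

theorem finrank_span_corootD_keptCorootIndex (hn : n = 2 * q + 2 * ℓ + 2) :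
    finrank ℝ (span ℝ (Set.range fun x => corootD n (keptCorootIndex q ℓ x))) = 2 * q + ℓ := by
  rw [corootD_keptCorootIndex hn, finrank_span_eq_card (linearIndependent_eps_sub_eps_succ
    keptCorootIndex_injective one_le_keptCorootIndex (keptCorootIndex_lt hn))]
  simp

end KeptCoroots

section Cascade

variable {n q ℓ : ℕ}

theorem range_cascadeFamily (hn : n = 2 * q + 2 * ℓ + 2) :
    Set.range (cascadeFamily n q ℓ) =
      {v | ∃ i, 1 ≤ i ∧ i ≤ (n - 2) / 2 ∧ v = eps n (2 * i - 1) + eps n (2 * i)}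
        ∪ {v | ∃ i, 1 ≤ i ∧ i ≤ (n - 2 - 2 * ℓ) / 2 ∧ v = eps n (n - 2 * ℓ - i) - eps n i} := by
  ext v
  constructor
  · rintro ⟨i | j, rfl⟩
    · exact Or.inl ⟨i + 1, by omega, by omega, by simp only [cascadeFamily, Sum.elim_inl]; rfl⟩
    · refine Or.inr ⟨j + 1, by omega, by omega, ?_⟩
      simp only [cascadeFamily, Sum.elim_inr]
      congr 2
      omega
  · rintro (⟨i, hi1, hi2, rfl⟩ | ⟨i, hi1, hi2, rfl⟩)
    · refine ⟨Sum.inl ⟨i - 1, by omega⟩, ?_⟩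
      simp only [cascadeFamily, Sum.elim_inl]
      congr 2 <;> omega
    · refine ⟨Sum.inr ⟨i - 1, by omega⟩, ?_⟩
      simp only [cascadeFamily, Sum.elim_inr]
      congr 2 <;> omega

theorem linearIndependent_restrictedInner_cascadeFamily (hn : n = 2 * q + 2 * ℓ + 2) :
    LinearIndependent ℝ fun x => restrictedInner (cascadeFamily n q ℓ x)
      (span ℝ (Set.range fun y => corootD n (keptCorootIndex q ℓ y))) := by
  rw [linearIndependent_restrictedInner_iff]
  intro G hG
  set A := extendOneBased (G ∘ Sum.inl)
  set B := extendOneBased (G ∘ Sum.inr)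
  set v : ℕ → ℝ := fun p => ⟪∑ x, G x • cascadeFamily n q ℓ x, eps n p⟫
  have hv : ∀ p, v p = A ((p + 1) / 2) + B (2 * q + 2 - p) - B p :=
    inner_sum_smul_cascadeFamily_eps (by omega) (by omega) G
  have hperp : ∀ y, v (keptCorootIndex q ℓ y + 1) = v (keptCorootIndex q ℓ y) := by
    intro y
    have h := hG _ (subset_span ⟨y, rfl⟩)
    beta_reduce at h
    rw [corootD_of_ne (keptCorootIndex_lt hn y).ne, inner_sub_right] at h
    exact (sub_eq_zero.mp h).symm
  have hB : ∀ j, j = 0 ∨ q < j → B j = 0 := fun j hj => extendOneBased_eq_zero _ hj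
  have hAtail : ∀ i, q < i → A i = 0 := fun i hi =>
    cascade_tail_eq_zero hv hB (fun i hi => extendOneBased_eq_zero _ (Or.inr hi))
      (fun t ht => hperp (Sum.inr ⟨t, ht⟩)) hi
  have hcore : ∀ k, 1 ≤ k → k < 2 * q + 1 → v (k + 1) = v k := by
    intro k hk1 hk
    obtain ⟨k, rfl⟩ : ∃ k', k = k' + 1 := ⟨k - 1, by omega⟩
    exact hperp (Sum.inl ⟨k, by omega⟩)
  obtain ⟨hAcore, hBcore⟩ :=
    cascade_core_eq_zero hv (fun j hj => hB j (Or.inr hj)) (hAtail _ q.lt_succ_self) hcore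
  funext x
  rcases x with i | j
  · refine (extendOneBased_succ (G ∘ Sum.inl) i).symm.trans ?_
    rcases le_or_gt ((i : ℕ) + 1) q with h | h
    · exact hAcore _ (by omega) h
    · exact hAtail _ h
  · exact (extendOneBased_succ (G ∘ Sum.inr) j).symm.trans (hBcore _ (by omega))

end Cascade

/-- Type `D_n`, `n ≥ 4` even, `0 ≤ ℓ ≤ (n-2)/2`,
`π' = π \ ({α_{n-1-2k} : 0 ≤ k ≤ ℓ} ∪ {α_n})`. With
`S⁺ = {β_i = ε_{2i-1} + ε_{2i} : 1 ≤ i ≤ (n-2)/2}` and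
`S⁻ = {-β'_i = ε_{n-2ℓ-i} - ε_i : 1 ≤ i ≤ (n-2-2ℓ)/2}`, the restrictions of
`S = S⁺ ∪ S⁻` to `h' = span{α^∨ : α ∈ π'}` form a basis of `(h')^*`; in
particular `|S| = n - 2 - ℓ = dim h'`. -/
theorem statement_15 (n ℓ : ℕ) (hn : 4 ≤ n) (hneven : Even n) (hl : 2 * ℓ ≤ n - 2)
    (S : Set (EuclideanSpace ℝ (Fin n)))
    (hS : S = {v | ∃ i, 1 ≤ i ∧ i ≤ (n - 2) / 2 ∧ v = eps n (2 * i - 1) + eps n (2 * i)}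
        ∪ {v | ∃ i, 1 ≤ i ∧ i ≤ (n - 2 - 2 * ℓ) / 2 ∧ v = eps n (n - 2 * ℓ - i) - eps n i})
    (h' : Submodule ℝ (EuclideanSpace ℝ (Fin n)))
    (hh' : h' = Submodule.span ℝ
        {v | ∃ k, 1 ≤ k ∧ k ≤ n ∧ ¬ (k = n ∨ ∃ t, t ≤ ℓ ∧ k = n - 1 - 2 * t) ∧
          v = corootD n k}) :
    S.ncard = n - 2 - ℓ ∧ Module.finrank ℝ h' = n - 2 - ℓ ∧
    LinearIndependent ℝ (fun x : S => restrictedInner (x : EuclideanSpace ℝ (Fin n)) h') ∧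
    Submodule.span ℝ
      (Set.range (fun x : S => restrictedInner (x : EuclideanSpace ℝ (Fin n)) h')) = ⊤ := by
  obtain ⟨m, hm⟩ := hneven
  obtain ⟨q, hq⟩ : ∃ q, n = 2 * q + 2 * ℓ + 2 := ⟨m - ℓ - 1, by omega⟩
  rw [← range_cascadeFamily hq] at hS
  rw [← range_corootD_keptCorootIndex hq] at hh'
  subst hS hh'
  have hli := linearIndependent_restrictedInner_cascadeFamily hq
  have hinj : Function.Injective (cascadeFamily n q ℓ) :=
    Function.Injective.of_comp (f := (restrictedInner · _)) hli.injective
  have hfinrank := finrank_span_corootD_keptCorootIndex hq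
  refine ⟨?_, by omega, ?_, ?_⟩
  · rw [Set.ncard_range_of_injective hinj, Nat.card_sum, Nat.card_fin, Nat.card_fin]
    omega
  · convert hli.comp _ (Equiv.ofInjective _ hinj).symm.injective using 1
    funext x
    rw [Function.comp_apply, Equiv.apply_ofInjective_symm hinj]
  · rw [← Function.comp_def (restrictedInner · _) Subtype.val, Set.range_comp, Subtype.range_coe,
      ← Set.range_comp]
    refine hli.span_eq_top_of_card_eq_finrank' ?_
    rw [Subspace.dual_finrank_eq, hfinrank, Fintype.card_sum, Fintype.card_fin, Fintype.card_fin]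
    omega
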